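/- Let A and B be finite-dimensional k-algebras, M an A-B-bimodule and N a B-A-bimodule such that N ⊗_A M is isomorphic, as a B-B-bimodule, to B ⊕ Q for some B-B-bimodule Q which is projective as a left B-module and as a right B-module. Assume that the functors M ⊗_B − : B-mod → A-mod and N ⊗_A − : A-mod → B-mod are biadjoint. If A is symmetric, i.e. A is isomorphic to its k-linear dual Hom_k(A, k) as an A-A-bimodule, then B is self-injective: B is injective as a left B-module and as a right B-module. -/

import Mathlib

set_option linter.unusedSectionVars false

open scoped TensorProduct
open MulOpposite

universe u

namespace JJ

attribute [local instance high] TensorProduct.instModule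

noncomputable section

section BalTensor

variable (B : Type u) [Ring B] (M : Type u) [AddCommGroup M] [Module Bᵐᵒᵖ M]
  (N : Type u) [AddCommGroup N] [Module B N]

/-- The subgroup of relations defining the balanced tensor product `M ⊗_B N`. -/
def balRel : Submodule ℤ (TensorProduct ℤ M N) :=
  Submodule.span ℤ { z | ∃ (b : B) (m : M) (n : N),
    z = (op b • m) ⊗ₜ[ℤ] n - m ⊗ₜ[ℤ] (b • n) }

/-- The balanced tensor product `M ⊗_B N` of a right `B`-module `M` and a left `B`-module `N`. -/
def BalTensor : Type u := TensorProduct ℤ M N ⧸ balRel B M N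

instance : AddCommGroup (BalTensor B M N) :=
  inferInstanceAs (AddCommGroup (TensorProduct ℤ M N ⧸ balRel B M N))

/-- The canonical projection onto the balanced tensor product. -/
def BalTensor.mk : TensorProduct ℤ M N →+ BalTensor B M N :=
  (balRel B M N).mkQ.toAddMonoidHom

/-- The image of a pure tensor in the balanced tensor product. -/
def BalTensor.tmul (m : M) (n : N) : BalTensor B M N := BalTensor.mk B M N (m ⊗ₜ n)

lemma BalTensor.mk_surjective : Function.Surjective (BalTensor.mk B M N) :=
  Submodule.mkQ_surjective _

lemma BalTensor.balance (b : B) (m : M) (n : N) :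
    BalTensor.tmul B M N (op b • m) n = BalTensor.tmul B M N m (b • n) := by
  have h : ((op b • m) ⊗ₜ[ℤ] n - m ⊗ₜ[ℤ] (b • n)) ∈ balRel B M N :=
    Submodule.subset_span ⟨b, m, n, rfl⟩
  have h2 := (Submodule.Quotient.mk_eq_zero (balRel B M N)).2 h
  rw [Submodule.Quotient.mk_sub] at h2
  exact sub_eq_zero.1 h2

end BalTensor

section LeftAction

variable (B : Type u) [Ring B] (M : Type u) [AddCommGroup M] [Module Bᵐᵒᵖ M]
  (N : Type u) [AddCommGroup N] [Module B N]
  (A : Type u) [Ring A] [Module A M] [SMulCommClass A Bᵐᵒᵖ M]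

/-- The left action of `a : A` on the plain tensor product. -/
def lActAux (a : A) : TensorProduct ℤ M N →ₗ[ℤ] TensorProduct ℤ M N :=
  LinearMap.rTensor N (DistribMulAction.toAddMonoidHom M a).toIntLinearMap

lemma lActAux_tmul (a : A) (m : M) (n : N) :
    lActAux M N A a (m ⊗ₜ n) = (a • m) ⊗ₜ n := by
  simp [lActAux]

lemma lActAux_rel (a : A) :
    balRel B M N ≤ (balRel B M N).comap (lActAux M N A a) := by
  rw [balRel, Submodule.span_le]
  rintro z ⟨b, m, n, rfl⟩
  simp only [SetLike.mem_coe, Submodule.mem_comap, map_sub, lActAux_tmul]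
  rw [smul_comm a (op b) m]
  exact Submodule.subset_span ⟨b, a • m, n, rfl⟩

/-- The left action of `A` on the balanced tensor product. -/
def lAct (a : A) : BalTensor B M N →ₗ[ℤ] BalTensor B M N :=
  Submodule.mapQ _ _ (lActAux M N A a) (lActAux_rel B M N A a)

instance : SMul A (BalTensor B M N) := ⟨fun a x => lAct B M N A a x⟩

lemma BalTensor.lsmul_mk (a : A) (x : TensorProduct ℤ M N) :
    a • (BalTensor.mk B M N x) = BalTensor.mk B M N (lActAux M N A a x) := rfl

lemma BalTensor.lsmul_tmul (a : A) (m : M) (n : N) :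
    a • (BalTensor.tmul B M N m n) = BalTensor.tmul B M N (a • m) n := by
  rw [BalTensor.tmul, BalTensor.lsmul_mk, lActAux_tmul]
  rfl

instance BalTensor.instLeftModule : Module A (BalTensor B M N) where
  one_smul x := by
    obtain ⟨y, rfl⟩ := BalTensor.mk_surjective B M N x
    rw [BalTensor.lsmul_mk]
    congr 1
    have h : lActAux M N A (1 : A) = LinearMap.id :=
      TensorProduct.ext' fun m n => by rw [lActAux_tmul, one_smul]; rfl
    rw [h]; rfl
  mul_smul a b x := by
    obtain ⟨y, rfl⟩ := BalTensor.mk_surjective B M N x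
    rw [BalTensor.lsmul_mk, BalTensor.lsmul_mk, BalTensor.lsmul_mk]
    congr 1
    have h : lActAux M N A (a * b) = (lActAux M N A a).comp (lActAux M N A b) :=
      TensorProduct.ext' fun m n => by
        simp only [LinearMap.comp_apply, lActAux_tmul, mul_smul]
    rw [h]; rfl
  smul_zero a := map_zero (lAct B M N A a)
  smul_add a x y := map_add (lAct B M N A a) x y
  add_smul a b x := by
    obtain ⟨y, rfl⟩ := BalTensor.mk_surjective B M N x
    rw [BalTensor.lsmul_mk, BalTensor.lsmul_mk, BalTensor.lsmul_mk, ← map_add]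
    congr 1
    have h : lActAux M N A (a + b) = lActAux M N A a + lActAux M N A b :=
      TensorProduct.ext' fun m n => by
        simp only [LinearMap.add_apply, lActAux_tmul, add_smul, TensorProduct.add_tmul]
    rw [h]; rfl
  zero_smul x := by
    obtain ⟨y, rfl⟩ := BalTensor.mk_surjective B M N x
    rw [BalTensor.lsmul_mk]
    have h : lActAux M N A (0 : A) = 0 :=
      TensorProduct.ext' fun m n => by
        simp only [lActAux_tmul, zero_smul, TensorProduct.zero_tmul, LinearMap.zero_apply]
    rw [h]
    simp

end LeftAction

section RightAction

variable (B : Type u) [Ring B] (M : Type u) [AddCommGroup M] [Module Bᵐᵒᵖ M]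
  (N : Type u) [AddCommGroup N] [Module B N]
  (C : Type u) [Ring C] [Module Cᵐᵒᵖ N] [SMulCommClass B Cᵐᵒᵖ N]

/-- The right action of `c : Cᵐᵒᵖ` on the plain tensor product. -/
def rActAux (c : Cᵐᵒᵖ) : TensorProduct ℤ M N →ₗ[ℤ] TensorProduct ℤ M N :=
  LinearMap.lTensor M (DistribMulAction.toAddMonoidHom N c).toIntLinearMap

lemma rActAux_tmul (c : Cᵐᵒᵖ) (m : M) (n : N) :
    rActAux M N C c (m ⊗ₜ n) = m ⊗ₜ (c • n) := by
  simp [rActAux]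

lemma rActAux_rel (c : Cᵐᵒᵖ) :
    balRel B M N ≤ (balRel B M N).comap (rActAux M N C c) := by
  rw [balRel, Submodule.span_le]
  rintro z ⟨b, m, n, rfl⟩
  simp only [SetLike.mem_coe, Submodule.mem_comap, map_sub, rActAux_tmul]
  rw [← smul_comm b c n]
  exact Submodule.subset_span ⟨b, m, c • n, rfl⟩

/-- The right action of `Cᵐᵒᵖ` on the balanced tensor product. -/
def rAct (c : Cᵐᵒᵖ) : BalTensor B M N →ₗ[ℤ] BalTensor B M N :=
  Submodule.mapQ _ _ (rActAux M N C c) (rActAux_rel B M N C c)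

instance : SMul Cᵐᵒᵖ (BalTensor B M N) := ⟨fun c x => rAct B M N C c x⟩

lemma BalTensor.rsmul_mk (c : Cᵐᵒᵖ) (x : TensorProduct ℤ M N) :
    c • (BalTensor.mk B M N x) = BalTensor.mk B M N (rActAux M N C c x) := rfl

lemma BalTensor.rsmul_tmul (c : Cᵐᵒᵖ) (m : M) (n : N) :
    c • (BalTensor.tmul B M N m n) = BalTensor.tmul B M N m (c • n) := by
  rw [BalTensor.tmul, BalTensor.rsmul_mk, rActAux_tmul]
  rfl

instance BalTensor.instRightModule : Module Cᵐᵒᵖ (BalTensor B M N) where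
  one_smul x := by
    obtain ⟨y, rfl⟩ := BalTensor.mk_surjective B M N x
    rw [BalTensor.rsmul_mk]
    congr 1
    have h : rActAux M N C (1 : Cᵐᵒᵖ) = LinearMap.id :=
      TensorProduct.ext' fun m n => by rw [rActAux_tmul, one_smul]; rfl
    rw [h]; rfl
  mul_smul a b x := by
    obtain ⟨y, rfl⟩ := BalTensor.mk_surjective B M N x
    rw [BalTensor.rsmul_mk, BalTensor.rsmul_mk, BalTensor.rsmul_mk]
    congr 1
    have h : rActAux M N C (a * b) = (rActAux M N C a).comp (rActAux M N C b) :=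
      TensorProduct.ext' fun m n => by
        simp only [LinearMap.comp_apply, rActAux_tmul, mul_smul]
    rw [h]; rfl
  smul_zero c := map_zero (rAct B M N C c)
  smul_add c x y := map_add (rAct B M N C c) x y
  add_smul a b x := by
    obtain ⟨y, rfl⟩ := BalTensor.mk_surjective B M N x
    rw [BalTensor.rsmul_mk, BalTensor.rsmul_mk, BalTensor.rsmul_mk, ← map_add]
    congr 1
    have h : rActAux M N C (a + b) = rActAux M N C a + rActAux M N C b :=
      TensorProduct.ext' fun m n => by
        simp only [LinearMap.add_apply, rActAux_tmul, add_smul, TensorProduct.tmul_add]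
    rw [h]; rfl
  zero_smul x := by
    obtain ⟨y, rfl⟩ := BalTensor.mk_surjective B M N x
    rw [BalTensor.rsmul_mk]
    have h : rActAux M N C (0 : Cᵐᵒᵖ) = 0 :=
      TensorProduct.ext' fun m n => by
        simp only [rActAux_tmul, zero_smul, TensorProduct.tmul_zero, LinearMap.zero_apply]
    rw [h]
    simp

end RightAction

section Comm

variable (B : Type u) [Ring B] (M : Type u) [AddCommGroup M] [Module Bᵐᵒᵖ M]
  (N : Type u) [AddCommGroup N] [Module B N]
  (A : Type u) [Ring A] [Module A M] [SMulCommClass A Bᵐᵒᵖ M]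
  (C : Type u) [Ring C] [Module Cᵐᵒᵖ N] [SMulCommClass B Cᵐᵒᵖ N]

instance BalTensor.instSMulCommClass : SMulCommClass A Cᵐᵒᵖ (BalTensor B M N) := by
  constructor
  intro a c x
  obtain ⟨y, rfl⟩ := BalTensor.mk_surjective B M N x
  rw [BalTensor.rsmul_mk, BalTensor.lsmul_mk, BalTensor.lsmul_mk, BalTensor.rsmul_mk]
  congr 1
  have h : (lActAux M N A a).comp (rActAux M N C c)
      = (rActAux M N C c).comp (lActAux M N A a) :=
    TensorProduct.ext' fun m n => by
      simp only [LinearMap.comp_apply, lActAux_tmul, rActAux_tmul]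
  exact DFunLike.congr_fun h y

end Comm

section BimodHom

variable (A : Type u) [Ring A] (C : Type u) [Ring C]
variable (X : Type u) [AddCommGroup X] [Module A X] [Module Cᵐᵒᵖ X]
variable (Y : Type u) [AddCommGroup Y] [Module A Y] [Module Cᵐᵒᵖ Y]

/-- A map of `(A,C)`-bimodules: additive, left `A`-equivariant and right `C`-equivariant. -/
structure IsBimodHom (f : X → Y) : Prop where
  map_add : ∀ x y, f (x + y) = f x + f y
  map_lsmul : ∀ (a : A) (x : X), f (a • x) = a • f x
  map_rsmul : ∀ (c : Cᵐᵒᵖ) (x : X), f (c • x) = c • f x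

/-- `X` is (isomorphic to) a direct summand of `Y` as an `(A,C)`-bimodule,
i.e. a retract of `Y`. -/
def IsBimodSummand : Prop :=
  ∃ (i : X → Y) (p : Y → X), IsBimodHom A C X Y i ∧ IsBimodHom A C Y X p ∧ ∀ x, p (i x) = x

end BimodHom

section Jorder

variable (k : Type u) [Field k]

/-- A finite-dimensional `(A,B)`-bimodule over `k`, whose two induced `k`-actions agree
with the given one. -/
structure BimodData (A B : Type u) [Ring A] [Ring B] [Algebra k A] [Algebra k B] :
    Type (u + 1) where
  X : Type u
  [acg : AddCommGroup X]
  [modk : Module k X]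
  [modl : Module A X]
  [modr : Module Bᵐᵒᵖ X]
  [scc : SMulCommClass A Bᵐᵒᵖ X]
  [tl : IsScalarTower k A X]
  [tr : IsScalarTower k Bᵐᵒᵖ X]
  [fd : FiniteDimensional k X]

attribute [instance] BimodData.acg BimodData.modk BimodData.modl BimodData.modr BimodData.scc
  BimodData.tl BimodData.tr BimodData.fd

variable (A B : Type u) [Ring A] [Ring B] [Algebra k A] [Algebra k B]

/-- `A ≥_J B`: there are finite-dimensional bimodules `M`, `N` such that the regular
`A`-`A`-bimodule `A` is a direct summand of `M ⊗_B N`. -/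
def Jge : Prop :=
  ∃ (M : BimodData k A B) (N : BimodData k B A),
    IsBimodSummand A A A (BalTensor B M.X N.X)

/-- `A ≤_J B`. -/
def Jle : Prop := Jge k B A

/-- `A ∼_J B`: two-sided equivalence. -/
def Jequiv : Prop := Jge k A B ∧ Jge k B A

/-- `A >_J B`: strict two-sided inequality. -/
def Jgt : Prop := Jge k A B ∧ ¬ Jge k B A

end Jorder


section RMap

variable (B : Type u) [Ring B] (M : Type u) [AddCommGroup M] [Module Bᵐᵒᵖ M]
  (A : Type u) [Ring A] [Module A M] [SMulCommClass A Bᵐᵒᵖ M]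
  (X : Type u) [AddCommGroup X] [Module B X]
  (X' : Type u) [AddCommGroup X'] [Module B X']

/-- Auxiliary map `M ⊗ X → M ⊗ X'` induced by `f : X → X'`. -/
def rmapAux (f : X →ₗ[B] X') : TensorProduct ℤ M X →ₗ[ℤ] TensorProduct ℤ M X' :=
  LinearMap.lTensor M f.toAddMonoidHom.toIntLinearMap

lemma rmapAux_tmul (f : X →ₗ[B] X') (m : M) (x : X) :
    rmapAux B M X X' f (m ⊗ₜ x) = m ⊗ₜ (f x) := by
  simp [rmapAux]

lemma rmapAux_rel (f : X →ₗ[B] X') :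
    balRel B M X ≤ (balRel B M X').comap (rmapAux B M X X' f) := by
  rw [balRel, Submodule.span_le]
  rintro z ⟨b, m, x, rfl⟩
  simp only [SetLike.mem_coe, Submodule.mem_comap, map_sub, rmapAux_tmul, map_smul]
  exact Submodule.subset_span ⟨b, m, f x, rfl⟩

/-- The map `M ⊗_B X → M ⊗_B X'` induced by `f : X → X'`, as a `ℤ`-linear map. -/
def rmapQ (f : X →ₗ[B] X') : BalTensor B M X →ₗ[ℤ] BalTensor B M X' :=
  Submodule.mapQ _ _ (rmapAux B M X X' f) (rmapAux_rel B M X X' f)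

lemma rmapQ_mk (f : X →ₗ[B] X') (z : TensorProduct ℤ M X) :
    rmapQ B M X X' f (BalTensor.mk B M X z) = BalTensor.mk B M X' (rmapAux B M X X' f z) :=
  rfl

lemma rmapAux_lActAux (f : X →ₗ[B] X') (a : A) (z : TensorProduct ℤ M X) :
    rmapAux B M X X' f (lActAux M X A a z) = lActAux M X' A a (rmapAux B M X X' f z) := by
  have h : (rmapAux B M X X' f).comp (lActAux M X A a)
      = (lActAux M X' A a).comp (rmapAux B M X X' f) := by
    unfold rmapAux lActAux
    rw [LinearMap.lTensor_comp_rTensor, LinearMap.rTensor_comp_lTensor]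
  exact DFunLike.congr_fun h z

/-- The functorial map `M ⊗_B X → M ⊗_B X'` induced by `f : X → X'`,
as a map of left `A`-modules. -/
def rmapA (f : X →ₗ[B] X') : BalTensor B M X →ₗ[A] BalTensor B M X' where
  toFun := rmapQ B M X X' f
  map_add' := map_add _
  map_smul' a y := by
    obtain ⟨z, rfl⟩ := BalTensor.mk_surjective B M X y
    simp only [RingHom.id_apply]
    rw [BalTensor.lsmul_mk, rmapQ_mk, rmapQ_mk, BalTensor.lsmul_mk, rmapAux_lActAux]

end RMap

section Adjunction

variable (k : Type u) [Field k]

/-- A bundled finite (i.e. finite-dimensional) module over a ring. -/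
structure FinModuleData (R : Type u) [Ring R] : Type (u + 1) where
  X : Type u
  [acg : AddCommGroup X]
  [mod : Module R X]
  [fin : Module.Finite R X]

attribute [instance] FinModuleData.acg FinModuleData.mod FinModuleData.fin

variable (A : Type u) [Ring A] (B : Type u) [Ring B]
  (M : Type u) [AddCommGroup M] [Module A M] [Module Bᵐᵒᵖ M] [SMulCommClass A Bᵐᵒᵖ M]
  (N : Type u) [AddCommGroup N] [Module B N] [Module Aᵐᵒᵖ N] [SMulCommClass B Aᵐᵒᵖ N]

/-- The functor `M ⊗_B −` from finite-dimensional left `B`-modules to finite-dimensional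
left `A`-modules is left adjoint to the functor `N ⊗_A −`: there is a bijection of
hom-sets which is natural in both variables. -/
def TensorAdjunction : Prop :=
  ∃ e : ∀ (X : FinModuleData B) (Y : FinModuleData A),
      (BalTensor B M X.X →ₗ[A] Y.X) ≃ (X.X →ₗ[B] BalTensor A N Y.X),
    (∀ (X X' : FinModuleData B) (f : X.X →ₗ[B] X'.X) (Y : FinModuleData A)
        (h : BalTensor B M X'.X →ₗ[A] Y.X),
        e X Y (h.comp (rmapA B M A X.X X'.X f)) = (e X' Y h).comp f) ∧
    (∀ (X : FinModuleData B) (Y Y' : FinModuleData A) (g : Y.X →ₗ[A] Y'.X)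
        (h : BalTensor B M X.X →ₗ[A] Y.X),
        e X Y' (g.comp h) = (rmapA A N B Y.X Y'.X g).comp (e X Y h))

end Adjunction
section DualBimod

variable (k : Type u) [Field k] (A : Type u) [Ring A] [Algebra k A]

/-- The left `A`-action on the `k`-linear dual `Hom_k(A, k)`, `(a • f) x = f (x a)`. -/
instance : Module A (A →ₗ[k] k) where
  smul a f := f.comp (LinearMap.mulRight k a)
  one_smul f := LinearMap.ext fun x => by
    show f (x * 1) = f x
    rw [mul_one]
  mul_smul a b f := LinearMap.ext fun x => by
    show f (x * (a * b)) = f ((x * a) * b)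
    rw [mul_assoc]
  smul_zero a := LinearMap.ext fun x => rfl
  smul_add a f f' := LinearMap.ext fun x => rfl
  add_smul a b f := LinearMap.ext fun x => by
    show f (x * (a + b)) = f (x * a) + f (x * b)
    rw [mul_add, map_add]
  zero_smul f := LinearMap.ext fun x => by
    show f (x * 0) = 0
    rw [mul_zero, map_zero]

lemma dual_lsmul_apply (a : A) (f : A →ₗ[k] k) (x : A) : (a • f) x = f (x * a) := rfl

/-- The right `A`-action on the `k`-linear dual `Hom_k(A, k)`, `(f • a) x = f (a x)`. -/
instance : Module Aᵐᵒᵖ (A →ₗ[k] k) where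
  smul c f := f.comp (LinearMap.mulLeft k c.unop)
  one_smul f := LinearMap.ext fun x => by
    show f ((1 : Aᵐᵒᵖ).unop * x) = f x
    rw [MulOpposite.unop_one, one_mul]
  mul_smul c c' f := LinearMap.ext fun x => by
    show f ((c * c').unop * x) = f (c'.unop * (c.unop * x))
    rw [MulOpposite.unop_mul, mul_assoc]
  smul_zero c := LinearMap.ext fun x => rfl
  smul_add c f f' := LinearMap.ext fun x => rfl
  add_smul c c' f := LinearMap.ext fun x => by
    show f ((c + c').unop * x) = f (c.unop * x) + f (c'.unop * x)
    rw [MulOpposite.unop_add, add_mul, map_add]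
  zero_smul f := LinearMap.ext fun x => by
    show f ((0 : Aᵐᵒᵖ).unop * x) = 0
    rw [MulOpposite.unop_zero, zero_mul, map_zero]

lemma dual_rsmul_apply (c : Aᵐᵒᵖ) (f : A →ₗ[k] k) (x : A) : (c • f) x = f (c.unop * x) := rfl

instance : SMulCommClass A Aᵐᵒᵖ (A →ₗ[k] k) :=
  ⟨fun a c f => LinearMap.ext fun x => by
    rw [dual_lsmul_apply, dual_rsmul_apply, dual_rsmul_apply, dual_lsmul_apply, mul_assoc]⟩

/-- `A` is a symmetric algebra: `A ≅ Hom_k(A, k)` as `A`-`A`-bimodules. -/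
def IsSymmetricAlgebra : Prop :=
  ∃ s : A → (A →ₗ[k] k), IsBimodHom A A A (A →ₗ[k] k) s ∧ Function.Bijective s

end DualBimod

/-!
A symmetric algebra `A` is self-injective, being isomorphic to `Hom_k(A, k)`. The adjunction
`M ⊗_B - ⊣ N ⊗_A -` gives `Hom_A(M, -) ≅ N ⊗_A -`, which preserves surjections, so `M` is a
projective and hence injective left `A`-module. The functor `N ⊗_A -` preserves injective modules
because its left adjoint `M ⊗_B -` is exact, being also a right adjoint; so `N ⊗_A M`, and with it
its summand `B`, is an injective left `B`-module.

On the right, the adjunction identifies `N` with `Hom_A(M, A)`, and composing with the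
symmetrising form of `A` gives `N ≅ Hom_k(M, k)` as left `B`-modules. As `N` is projective over
`B` (by the first argument for the other adjunction), `M` is an injective right `B`-module by
`k`-duality. Finally `N` is a summand of some `Aⁿ` as a right `A`-module, so `N ⊗_A M` is a
summand of `Mⁿ` as a right `B`-module, and `B` is again a summand of it.
-/

section ModuleFacts

variable {R : Type u} [Ring R]

lemma injective_of_split {P Q : Type u} [AddCommGroup P] [AddCommGroup Q] [Module R P]
    [Module R Q] [Module.Injective R Q] (i : P →ₗ[R] Q) (s : Q →ₗ[R] P)
    (H : s ∘ₗ i = LinearMap.id) : Module.Injective R P := by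
  refine ⟨fun X Y _ _ _ _ f hf g => ?_⟩
  obtain ⟨h, hh⟩ := Module.Injective.out f hf (i ∘ₗ g)
  refine ⟨s ∘ₗ h, fun x => ?_⟩
  rw [LinearMap.comp_apply, hh, ← LinearMap.comp_apply s, ← LinearMap.comp_assoc, H,
    LinearMap.id_comp]

lemma injective_of_linearEquiv_prod {P Y Q : Type u} [AddCommGroup P] [AddCommGroup Y]
    [AddCommGroup Q] [Module R P] [Module R Y] [Module R Q] [Module.Injective R P]
    (e : P ≃ₗ[R] Y × Q) : Module.Injective R Y :=
  injective_of_split (e.symm.toLinearMap ∘ₗ LinearMap.inl R Y Q)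
    (LinearMap.fst R Y Q ∘ₗ e.toLinearMap) (by ext; simp)

lemma injective_of_projective [Module.Injective R R] (P : Type u) [AddCommGroup P]
    [Module R P] [Module.Finite R P] [Module.Projective R P] : Module.Injective R P := by
  obtain ⟨n, f, g, -, -, hfg⟩ := Module.Finite.exists_comp_eq_id_of_projective R P
  exact injective_of_split g f hfg

lemma sum_op_smul_single {n : ℕ} (v : Fin n → R) :
    ∑ j, op (v j) • (Pi.single j 1 : Fin n → R) = v := by
  ext l
  simp [Finset.sum_apply, Pi.single_apply]

end ModuleFacts

section BimodEquiv

variable {A C X Y : Type u} [Ring A] [Ring C]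
  [AddCommGroup X] [Module A X] [Module Cᵐᵒᵖ X] [AddCommGroup Y] [Module A Y] [Module Cᵐᵒᵖ Y]
  {f : X → Y}

def IsBimodHom.leftLinearEquiv (hf : IsBimodHom A C X Y f) (hb : Function.Bijective f) :
    X ≃ₗ[A] Y :=
  LinearEquiv.ofBijective ⟨⟨f, hf.map_add⟩, hf.map_lsmul⟩ hb

def IsBimodHom.rightLinearEquiv (hf : IsBimodHom A C X Y f) (hb : Function.Bijective f) :
    X ≃ₗ[Cᵐᵒᵖ] Y :=
  LinearEquiv.ofBijective ⟨⟨f, hf.map_add⟩, hf.map_rsmul⟩ hb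

end BimodEquiv

section BalTensorAPI

variable {B : Type u} [Ring B] {M : Type u} [AddCommGroup M] [Module Bᵐᵒᵖ M]
  {N : Type u} [AddCommGroup N] [Module B N]

@[elab_as_elim]
lemma BalTensor.induction_on {P : BalTensor B M N → Prop} (z : BalTensor B M N)
    (zero : P 0) (tmul : ∀ m n, P (BalTensor.tmul B M N m n))
    (add : ∀ x y, P x → P y → P (x + y)) : P z := by
  obtain ⟨w, rfl⟩ := BalTensor.mk_surjective B M N z
  induction w using TensorProduct.induction_on with
  | zero => rw [map_zero]; exact zero
  | tmul m n => exact tmul m n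
  | add x y hx hy => rw [map_add]; exact add _ _ hx hy

lemma BalTensor.tmul_add (m : M) (n n' : N) :
    BalTensor.tmul B M N m (n + n') = BalTensor.tmul B M N m n + BalTensor.tmul B M N m n' := by
  rw [BalTensor.tmul, TensorProduct.tmul_add, map_add]; rfl

lemma BalTensor.add_tmul (m m' : M) (n : N) :
    BalTensor.tmul B M N (m + m') n = BalTensor.tmul B M N m n + BalTensor.tmul B M N m' n := by
  rw [BalTensor.tmul, TensorProduct.add_tmul, map_add]; rfl

lemma BalTensor.zero_tmul (n : N) : BalTensor.tmul B M N 0 n = 0 := by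
  rw [BalTensor.tmul, TensorProduct.zero_tmul, map_zero]

lemma BalTensor.sum_tmul {ι : Type*} (s : Finset ι) (f : ι → M) (n : N) :
    BalTensor.tmul B M N (∑ i ∈ s, f i) n = ∑ i ∈ s, BalTensor.tmul B M N (f i) n := by
  rw [BalTensor.tmul, TensorProduct.sum_tmul, map_sum]; rfl

variable (B M N) in
def BalTensor.lift {P : Type u} [AddCommGroup P] (f : M →+ N →+ P)
    (hf : ∀ (b : B) (m : M) (n : N), f (op b • m) n = f m (b • n)) : BalTensor B M N →+ P :=
  ((balRel B M N).liftQ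
    { toFun := TensorProduct.liftAddHom f fun r m n => by
        simp only [map_zsmul, AddMonoidHom.zsmul_apply]
      map_add' := map_add _
      map_smul' := fun c x => by rw [RingHom.id_apply, ← map_zsmul] }
    (by
      rw [balRel, Submodule.span_le]
      rintro _ ⟨b, m, n, rfl⟩
      rw [SetLike.mem_coe, LinearMap.mem_ker, map_sub]
      exact sub_eq_zero.2 (hf b m n))).toAddMonoidHom

end BalTensorAPI

section RMap

variable (B : Type u) [Ring B] (M : Type u) [AddCommGroup M] [Module Bᵐᵒᵖ M]
  (A : Type u) [Ring A] [Module A M] [SMulCommClass A Bᵐᵒᵖ M]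
  {X : Type u} [AddCommGroup X] [Module B X] {X' : Type u} [AddCommGroup X'] [Module B X']

lemma rmapA_tmul (f : X →ₗ[B] X') (m : M) (x : X) :
    rmapA B M A X X' f (BalTensor.tmul B M X m x) = BalTensor.tmul B M X' m (f x) := by
  show rmapQ B M X X' f (BalTensor.mk B M X (m ⊗ₜ x)) = _
  rw [rmapQ_mk, rmapAux_tmul]
  rfl

lemma rmapA_add (f g : X →ₗ[B] X') :
    rmapA B M A X X' (f + g) = rmapA B M A X X' f + rmapA B M A X X' g := by
  ext z
  induction z using BalTensor.induction_on with
  | zero => simp only [map_zero]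
  | tmul m x =>
    rw [LinearMap.add_apply, rmapA_tmul, rmapA_tmul, rmapA_tmul, LinearMap.add_apply,
      BalTensor.tmul_add]
  | add a b ha hb => rw [map_add, ha, hb, map_add]

lemma rmapA_surjective {f : X →ₗ[B] X'} (hf : Function.Surjective f) :
    Function.Surjective (rmapA B M A X X' f) := by
  intro z
  induction z using BalTensor.induction_on with
  | zero => exact ⟨0, map_zero _⟩
  | tmul m x' =>
    obtain ⟨x, rfl⟩ := hf x'
    exact ⟨BalTensor.tmul B M X m x, rmapA_tmul B M A f m x⟩
  | add a b ha hb =>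
    obtain ⟨za, rfl⟩ := ha
    obtain ⟨zb, rfl⟩ := hb
    exact ⟨za + zb, map_add _ _ _⟩

end RMap

namespace BalTensor

variable (B : Type u) [Ring B] (M : Type u) [AddCommGroup M] [Module Bᵐᵒᵖ M]
  (A : Type u) [Ring A] [Module A M] [SMulCommClass A Bᵐᵒᵖ M]

def rid : BalTensor B M B ≃ₗ[A] M where
  toFun := lift B M B
    (AddMonoidHom.mk' (fun m => AddMonoidHom.mk' (fun b => op b • m) fun b b' => by
      rw [op_add, add_smul]) fun m m' => by ext; simp)
    (fun b m x => by simp [mul_smul])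
  map_add' := map_add _
  map_smul' a z := by
    induction z using induction_on with
    | zero => simp only [smul_zero, map_zero]
    | tmul m x => exact (smul_comm a (op x) m).symm
    | add x y hx hy => simp only [smul_add, map_add, hx, hy]
  invFun m := tmul B M B m 1
  left_inv z := by
    induction z using induction_on with
    | zero => exact zero_tmul 1
    | tmul m x => exact (balance B M B x m 1).trans (by rw [smul_eq_mul, mul_one])
    | add x y hx hy => simp only [map_add, add_tmul, hx, hy]
  right_inv m := show op (1 : B) • m = m by rw [op_one, one_smul]

lemma rid_tmul (m : M) (b : B) : rid B M A (tmul B M B m b) = op b • m :=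
  rfl

lemma rid_rmapA_toSpanSingleton (b : B) (w : BalTensor B M B) :
    rid B M A (rmapA B M A B B (LinearMap.toSpanSingleton B B b) w) = op b • rid B M A w := by
  induction w using induction_on with
  | zero => simp only [map_zero, smul_zero]
  | tmul m x =>
    rw [rmapA_tmul, rid_tmul, rid_tmul, LinearMap.toSpanSingleton_apply, smul_eq_mul, op_mul,
      mul_smul]
  | add p q hp hq => rw [map_add, map_add, hp, hq, map_add, smul_add]

end BalTensor

section PiSummand

variable {A : Type u} [Ring A] {B : Type u} [Ring B]
  {N : Type u} [AddCommGroup N] [Module Aᵐᵒᵖ N]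
  {M : Type u} [AddCommGroup M] [Module A M] [Module Bᵐᵒᵖ M] [SMulCommClass A Bᵐᵒᵖ M]
  {n : ℕ}

/-- `x ⊗ m ↦ (i x j • m)ⱼ`. -/
def balTensorToPi (i : N →ₗ[Aᵐᵒᵖ] (Fin n → A)) : BalTensor A N M →ₗ[Bᵐᵒᵖ] (Fin n → M) where
  toFun := BalTensor.lift A N M
    (AddMonoidHom.mk' (fun x => AddMonoidHom.mk' (fun m j => i x j • m) fun m m' => by
      ext; simp [smul_add]) fun x x' => by ext; simp [add_smul])
    (fun a x m => by ext j; simp [MulOpposite.smul_eq_mul_unop, mul_smul])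
  map_add' := map_add _
  map_smul' c z := by
    induction z using BalTensor.induction_on with
    | zero => simp only [smul_zero, map_zero]
    | tmul x m =>
      rw [BalTensor.rsmul_tmul]
      ext j
      exact smul_comm (i x j) c m
    | add x y hx hy => simp only [smul_add, map_add, hx, hy, RingHom.id_apply]

def piToBalTensor (p : (Fin n → A) →ₗ[Aᵐᵒᵖ] N) : (Fin n → M) →ₗ[Bᵐᵒᵖ] BalTensor A N M where
  toFun v := ∑ j, BalTensor.tmul A N M (p (Pi.single j 1)) (v j)
  map_add' v w := by simp only [Pi.add_apply, BalTensor.tmul_add, Finset.sum_add_distrib]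
  map_smul' c v := by simp only [Pi.smul_apply, ← BalTensor.rsmul_tmul, Finset.smul_sum,
    RingHom.id_apply]

lemma piToBalTensor_comp_balTensorToPi {i : N →ₗ[Aᵐᵒᵖ] (Fin n → A)}
    {p : (Fin n → A) →ₗ[Aᵐᵒᵖ] N} (hpi : p ∘ₗ i = LinearMap.id) :
    piToBalTensor (M := M) (B := B) p ∘ₗ balTensorToPi i = LinearMap.id := by
  ext z
  induction z using BalTensor.induction_on with
  | zero => simp only [map_zero]
  | tmul x m =>
    change ∑ j, BalTensor.tmul A N M (p (Pi.single j 1)) (i x j • m) = BalTensor.tmul A N M x m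
    simp_rw [← BalTensor.balance, ← map_smul, ← BalTensor.sum_tmul, ← map_sum,
      sum_op_smul_single, ← LinearMap.comp_apply, hpi, LinearMap.id_apply]
  | add x y hx hy => simp only [map_add, hx, hy]

lemma injective_balTensor_of_split [Module.Injective Bᵐᵒᵖ M]
    (i : N →ₗ[Aᵐᵒᵖ] (Fin n → A)) (p : (Fin n → A) →ₗ[Aᵐᵒᵖ] N) (hpi : p ∘ₗ i = LinearMap.id) :
    Module.Injective Bᵐᵒᵖ (BalTensor A N M) :=
  injective_of_split (balTensorToPi i) (piToBalTensor p) (piToBalTensor_comp_balTensorToPi hpi)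

end PiSummand

abbrev FinModuleData.of (R : Type u) [Ring R] (X : Type u) [AddCommGroup X] [Module R X]
    [Module.Finite R X] : FinModuleData R :=
  { X := X }

section HomEquiv

variable {A : Type u} [Ring A] {B : Type u} [Ring B]
  {M : Type u} [AddCommGroup M] [Module A M] [Module Bᵐᵒᵖ M] [SMulCommClass A Bᵐᵒᵖ M]
  {N : Type u} [AddCommGroup N] [Module B N] [Module Aᵐᵒᵖ N] [SMulCommClass B Aᵐᵒᵖ N]
  (e : ∀ (X : FinModuleData B) (Y : FinModuleData A),
    (BalTensor B M X.X →ₗ[A] Y.X) ≃ (X.X →ₗ[B] BalTensor A N Y.X))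
  (nat₁ : ∀ (X X' : FinModuleData B) (f : X.X →ₗ[B] X'.X) (Y : FinModuleData A)
    (h : BalTensor B M X'.X →ₗ[A] Y.X),
    e X Y (h.comp (rmapA B M A X.X X'.X f)) = (e X' Y h).comp f)
  (nat₂ : ∀ (X : FinModuleData B) (Y Y' : FinModuleData A) (g : Y.X →ₗ[A] Y'.X)
    (h : BalTensor B M X.X →ₗ[A] Y.X),
    e X Y' (g.comp h) = (rmapA A N B Y.X Y'.X g).comp (e X Y h))

include nat₁ in
lemma homEquiv_symm_comp_rmapA {X X' : FinModuleData B} (f : X.X →ₗ[B] X'.X)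
    {Y : FinModuleData A} (φ : X'.X →ₗ[B] BalTensor A N Y.X) :
    (e X Y).symm (φ ∘ₗ f) = (e X' Y).symm φ ∘ₗ rmapA B M A X.X X'.X f :=
  (e X Y).symm_apply_eq.2 (by rw [nat₁, Equiv.apply_symm_apply])

include nat₂ in
lemma homEquiv_symm_rmapA_comp {X : FinModuleData B} {Y Y' : FinModuleData A}
    (g : Y.X →ₗ[A] Y'.X) (φ : X.X →ₗ[B] BalTensor A N Y.X) :
    (e X Y').symm (rmapA A N B Y.X Y'.X g ∘ₗ φ) = g ∘ₗ (e X Y).symm φ :=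
  (e X Y').symm_apply_eq.2 (by rw [nat₂, Equiv.apply_symm_apply])

include nat₂ in
lemma homEquiv_symm_zero (X : FinModuleData B) (Y : FinModuleData A) : (e X Y).symm 0 = 0 := by
  have h := homEquiv_symm_rmapA_comp e nat₂ (0 : Y.X →ₗ[A] Y.X) (0 : X.X →ₗ[B] _)
  rwa [LinearMap.comp_zero, LinearMap.zero_comp] at h

include nat₂ in
lemma rmapA_injective_of_homEquiv {Y Y' : FinModuleData A} {g : Y.X →ₗ[A] Y'.X}
    (hg : Function.Injective g) : Function.Injective (rmapA A N B Y.X Y'.X g) := by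
  refine (injective_iff_map_eq_zero _).2 fun z hz => ?_
  set φ := (e (.of B B) Y).symm (LinearMap.toSpanSingleton B _ z)
  have hgφ : g ∘ₗ φ = 0 := by
    rw [← homEquiv_symm_rmapA_comp e nat₂, ← homEquiv_symm_zero e nat₂ (.of B B) Y']
    congr 1
    ext
    simpa using hz
  have hφ : φ = 0 := LinearMap.ext fun x => hg (by simpa using LinearMap.congr_fun hgφ x)
  have h0 : LinearMap.toSpanSingleton B _ z = 0 := by
    rw [(e (.of B B) Y).symm_apply_eq.1 hφ, ← homEquiv_symm_zero e nat₂, Equiv.apply_symm_apply]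
  simpa using LinearMap.congr_fun h0 1

include nat₂ in
/-- `Hom_A(M, -) ≅ Hom_B(B, N ⊗_A -)` preserves surjections because `N ⊗_A -` does. -/
lemma exists_lift_of_homEquiv {Y Y' : FinModuleData A} {π : Y.X →ₗ[A] Y'.X}
    (hπ : Function.Surjective π) (φ : M →ₗ[A] Y'.X) : ∃ ψ : M →ₗ[A] Y.X, π ∘ₗ ψ = φ := by
  obtain ⟨z, hz⟩ := rmapA_surjective A N B hπ
    (e (.of B B) Y' (φ ∘ₗ (BalTensor.rid B M A).toLinearMap) 1)
  set ψ := (e (.of B B) Y).symm (LinearMap.toSpanSingleton B _ z)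
  have hπψ : π ∘ₗ ψ = φ ∘ₗ (BalTensor.rid B M A).toLinearMap := by
    rw [← homEquiv_symm_rmapA_comp e nat₂, Equiv.symm_apply_eq]
    ext
    simpa using hz
  refine ⟨ψ ∘ₗ (BalTensor.rid B M A).symm.toLinearMap, ?_⟩
  rw [← LinearMap.comp_assoc, hπψ, LinearMap.comp_assoc]
  ext m
  simp

include nat₂ in
lemma homEquiv_add [Module.Finite A M] (Y : FinModuleData A) (g g' : BalTensor B M B →ₗ[A] Y.X) :
    e (.of B B) Y (g + g') = e (.of B B) Y g + e (.of B B) Y g' := by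
  have : Module.Finite A (BalTensor B M B) := .equiv (BalTensor.rid B M A).symm
  have key (g₀ : BalTensor B M B →ₗ[A] Y.X) :
      e (.of B B) Y g₀ =
        rmapA A N B _ Y.X g₀ ∘ₗ e (.of B B) (.of A (BalTensor B M B)) LinearMap.id := by
    simpa using nat₂ (.of B B) (.of A (BalTensor B M B)) Y g₀ LinearMap.id
  rw [key, key g, key g', rmapA_add, LinearMap.add_comp]

def homAddEquiv [Module.Finite A M] (Y : FinModuleData A) :
    (BalTensor B M B →ₗ[A] Y.X) ≃+ (B →ₗ[B] BalTensor A N Y.X) :=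
  { e (.of B B) Y with map_add' := homEquiv_add e nat₂ Y }

include nat₁ in
/-- Baer's criterion, transported along the adjunction: an ideal `I ≤ B` becomes the
submodule `M ⊗_B I ≤ M ⊗_B B` as soon as `M ⊗_B -` preserves injections. -/
lemma injective_balTensor_of_homEquiv [IsNoetherian B B]
    (hM : ∀ {X X' : FinModuleData B} {f : X.X →ₗ[B] X'.X}, Function.Injective f →
      Function.Injective (rmapA B M A X.X X'.X f))
    (Y : Type u) [AddCommGroup Y] [Module A Y] [Module.Finite A Y] [Module.Injective A Y] :
    Module.Injective B (BalTensor A N Y) := by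
  refine Module.Baer.injective fun I g => ?_
  have : Module.Finite B I := Module.Finite.iff_fg.mpr (IsNoetherian.noetherian I)
  obtain ⟨ψ, hψ⟩ := Module.Injective.extension_property A Y _ _ (rmapA B M A I B I.subtype)
    (hM (X := .of B I) (X' := .of B B) I.injective_subtype) ((e (.of B I) (.of A Y)).symm g)
  refine ⟨e (.of B B) (.of A Y) ψ, fun x hx => ?_⟩
  have h := nat₁ (.of B I) (.of B B) I.subtype (.of A Y) ψ
  rw [hψ, Equiv.apply_symm_apply] at h
  exact (LinearMap.congr_fun h ⟨x, hx⟩).symm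

include nat₁ nat₂ in
lemma exists_addEquiv_of_homEquiv [Module.Finite A M] :
    ∃ Θ : N ≃+ (M →ₗ[A] A), (∀ (a : A) (x : N) (m : M), Θ (op a • x) m = Θ x m * a) ∧
      ∀ (b : B) (x : N) (m : M), Θ (b • x) m = Θ x (op b • m) := by
  -- `N ≅ N ⊗_A A ≅ Hom_B(B, N ⊗_A A) ≅ Hom_A(M ⊗_B B, A) ≅ Hom_A(M, A)`
  let Θ : N ≃+ (M →ₗ[A] A) := (BalTensor.rid A N B).symm.toAddEquiv.trans
    ((LinearMap.ringLmapEquivSelf B ℕ _).symm.toAddEquiv.trans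
    ((homAddEquiv e nat₂ (.of A A)).symm.trans
    (LinearEquiv.arrowCongrAddEquiv (BalTensor.rid B M A) (LinearEquiv.refl A A))))
  have hΘ (x : N) : Θ x = (e (.of B B) (.of A A)).symm
      (LinearMap.toSpanSingleton B _ ((BalTensor.rid A N B).symm x)) ∘ₗ
      (BalTensor.rid B M A).symm.toLinearMap :=
    rfl
  refine ⟨Θ, fun a x m => ?_, fun b x m => ?_⟩
  · have h : LinearMap.toSpanSingleton B _ ((BalTensor.rid A N B).symm (op a • x)) =
        rmapA A N B A A (LinearMap.toSpanSingleton A A a) ∘ₗ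
          LinearMap.toSpanSingleton B _ ((BalTensor.rid A N B).symm x) := by
      ext
      simp [(BalTensor.rid A N B).symm_apply_eq, BalTensor.rid_rmapA_toSpanSingleton]
    rw [hΘ, hΘ, h, homEquiv_symm_rmapA_comp e nat₂ (X := .of B B) (Y := .of A A) (Y' := .of A A)]
    rfl
  · have h : LinearMap.toSpanSingleton B _ ((BalTensor.rid A N B).symm (b • x)) =
        LinearMap.toSpanSingleton B _ ((BalTensor.rid A N B).symm x) ∘ₗ
          LinearMap.toSpanSingleton B B b := by
      ext
      simp
    rw [hΘ, hΘ, h, homEquiv_symm_comp_rmapA e nat₁ (X := .of B B) (X' := .of B B) (Y := .of A A)]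
    simp only [LinearMap.comp_apply, LinearEquiv.coe_coe]
    congr 1
    rw [LinearEquiv.eq_symm_apply, BalTensor.rid_rmapA_toSpanSingleton,
      LinearEquiv.apply_symm_apply]

end HomEquiv

section HomSelfSummand

variable (A : Type u) [Ring A] (M : Type u) [AddCommGroup M] [Module A M]

lemma exists_split_hom_self [Module.Finite A M] [Module.Projective A M] :
    ∃ (n : ℕ) (i : (M →ₗ[A] A) →ₗ[Aᵐᵒᵖ] (Fin n → A)) (p : (Fin n → A) →ₗ[Aᵐᵒᵖ] (M →ₗ[A] A)),
      p ∘ₗ i = LinearMap.id := by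
  obtain ⟨n, π, σ, -, -, hπσ⟩ := Module.Finite.exists_comp_eq_id_of_projective A M
  let i : (M →ₗ[A] A) →ₗ[Aᵐᵒᵖ] (Fin n → A) :=
    { toFun := fun φ j => φ (π (Pi.single j 1))
      map_add' := fun _ _ => rfl
      map_smul' := fun _ _ => rfl }
  let p : (Fin n → A) →ₗ[Aᵐᵒᵖ] (M →ₗ[A] A) :=
    { toFun := fun v => ∑ j, (LinearMap.proj j ∘ₗ σ).smulRight (v j)
      map_add' := fun v w => by
        ext m
        simp [mul_add, Finset.sum_add_distrib]
      map_smul' := fun c v => by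
        ext m
        simp [Finset.sum_mul, MulOpposite.smul_eq_mul_unop, mul_assoc] }
  refine ⟨n, i, p, ?_⟩
  ext φ m
  have hσ : ∑ j, σ m j • (Pi.single j 1 : Fin n → A) = σ m := by
    ext l
    simp [Finset.sum_apply, Pi.single_apply]
  simp only [p, i, LinearMap.comp_apply, LinearMap.coe_mk, AddHom.coe_mk, LinearMap.sum_apply,
    LinearMap.smulRight_apply, LinearMap.proj_apply]
  simp_rw [← map_smul, ← map_sum, hσ, ← LinearMap.comp_apply π σ, hπσ,
    LinearMap.id_apply]

end HomSelfSummand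

namespace TensorAdjunction

variable {A : Type u} [Ring A] {B : Type u} [Ring B]
  {M : Type u} [AddCommGroup M] [Module A M] [Module Bᵐᵒᵖ M] [SMulCommClass A Bᵐᵒᵖ M]
  {N : Type u} [AddCommGroup N] [Module B N] [Module Aᵐᵒᵖ N] [SMulCommClass B Aᵐᵒᵖ N]

lemma rmapA_injective (h : TensorAdjunction A B M N) {Y Y' : FinModuleData A}
    {g : Y.X →ₗ[A] Y'.X} (hg : Function.Injective g) :
    Function.Injective (rmapA A N B Y.X Y'.X g) :=
  let ⟨e, _, nat₂⟩ := h
  rmapA_injective_of_homEquiv e nat₂ hg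

lemma projective [Module.Finite A M] (h : TensorAdjunction A B M N) : Module.Projective A M := by
  obtain ⟨e, -, nat₂⟩ := h
  obtain ⟨n, π, hπ⟩ := Module.Finite.exists_fin' A M
  obtain ⟨σ, hσ⟩ := exists_lift_of_homEquiv e nat₂ (Y := .of A (Fin n → A)) (Y' := .of A M) hπ
    LinearMap.id
  exact .of_split σ π hσ

lemma injective_balTensor [IsNoetherian B B] (h₁ : TensorAdjunction A B M N)
    (h₂ : TensorAdjunction B A N M) (Y : Type u) [AddCommGroup Y] [Module A Y]
    [Module.Finite A Y] [Module.Injective A Y] : Module.Injective B (BalTensor A N Y) :=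
  let ⟨e, nat₁, _⟩ := h₁
  injective_balTensor_of_homEquiv e nat₁ h₂.rmapA_injective Y

lemma exists_addEquiv [Module.Finite A M] (h : TensorAdjunction A B M N) :
    ∃ Θ : N ≃+ (M →ₗ[A] A), (∀ (a : A) (x : N) (m : M), Θ (op a • x) m = Θ x m * a) ∧
      ∀ (b : B) (x : N) (m : M), Θ (b • x) m = Θ x (op b • m) :=
  let ⟨e, nat₁, nat₂⟩ := h
  exists_addEquiv_of_homEquiv e nat₁ nat₂

lemma exists_split_right [Module.Finite A M] (h : TensorAdjunction A B M N) :
    ∃ (n : ℕ) (i : N →ₗ[Aᵐᵒᵖ] (Fin n → A)) (p : (Fin n → A) →ₗ[Aᵐᵒᵖ] N),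
      p ∘ₗ i = LinearMap.id := by
  obtain ⟨Θ, hΘ, -⟩ := h.exists_addEquiv
  let Θₗ : N ≃ₗ[Aᵐᵒᵖ] (M →ₗ[A] A) :=
    { Θ with map_smul' := fun c x => LinearMap.ext fun m => hΘ c.unop x m }
  have : Module.Projective A M := h.projective
  obtain ⟨n, i, p, hpi⟩ := exists_split_hom_self A M
  refine ⟨n, i ∘ₗ Θₗ.toLinearMap, Θₗ.symm.toLinearMap ∘ₗ p, ?_⟩
  ext x
  simpa using congrArg Θₗ.symm (LinearMap.congr_fun hpi (Θₗ x))

end TensorAdjunction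

section SymmetricAlgebra

variable (k : Type u) [Field k] (A : Type u) [Ring A] [Algebra k A]

lemma injective_dual : Module.Injective A (A →ₗ[k] k) := by
  refine Module.Baer.injective fun I g => ?_
  let g₁ : I.restrictScalars k →ₗ[k] k :=
    { toFun := fun x => g ⟨x, x.2⟩ 1
      map_add' := fun x y => by
        change g (⟨x, x.2⟩ + ⟨y, y.2⟩) 1 = _
        rw [map_add, LinearMap.add_apply]
      map_smul' := fun c x => by
        rw [show (⟨_, (c • x).2⟩ : I) = algebraMap k A c • ⟨x, x.2⟩ from
          Subtype.ext (Algebra.smul_def c (x : A)), map_smul, dual_lsmul_apply, one_mul,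
          Algebra.algebraMap_eq_smul_one, map_smul, RingHom.id_apply] }
  obtain ⟨g₂, hg₂⟩ := LinearMap.exists_extend g₁
  refine ⟨LinearMap.toSpanSingleton A _ g₂, fun x hx => LinearMap.ext fun y => ?_⟩
  have hyx : y * x ∈ I.restrictScalars k := I.mul_mem_left y hx
  change g₂ ((I.restrictScalars k).subtype ⟨y * x, hyx⟩) = _
  rw [← LinearMap.comp_apply, hg₂]
  change g (y • ⟨x, hx⟩) 1 = _
  rw [map_smul, dual_lsmul_apply, one_mul]

variable {k A}

lemma IsSymmetricAlgebra.injective_self (h : IsSymmetricAlgebra k A) : Module.Injective A A := by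
  obtain ⟨s, hs, hb⟩ := h
  have := injective_dual k A
  exact injective_of_split (hs.leftLinearEquiv hb).toLinearMap
    (hs.leftLinearEquiv hb).symm.toLinearMap (by ext; simp)

variable {s : A → (A →ₗ[k] k)} (hs : IsBimodHom A A A (A →ₗ[k] k) s)

def IsBimodHom.form : A →ₗ[k] k where
  toFun a := s a 1
  map_add' a b := by rw [hs.map_add, LinearMap.add_apply]
  map_smul' c a := by
    rw [← algebraMap_smul A c a, hs.map_lsmul, dual_lsmul_apply, one_mul,
      Algebra.algebraMap_eq_smul_one, map_smul, RingHom.id_apply]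

lemma IsBimodHom.form_mul (a b : A) : hs.form (a * b) = s b a := by
  change s (a • b) 1 = _
  rw [hs.map_lsmul, dual_lsmul_apply, one_mul]

variable {M : Type u} [AddCommGroup M] [Module k M] [Module A M] [IsScalarTower k A M]

/-- The adjunct of `f` under `Hom_A(M, Hom_k(A, k)) ≅ Hom_k(M, k)`. -/
def dualCurry (f : M →ₗ[k] k) : M →ₗ[A] (A →ₗ[k] k) where
  toFun m := f ∘ₗ (LinearMap.toSpanSingleton A M m).restrictScalars k
  map_add' m m' := by ext; simp
  map_smul' a m := by ext; simp [dual_lsmul_apply, mul_smul]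

lemma IsBimodHom.bijective_form_comp (hb : Function.Bijective s) :
    Function.Bijective fun φ : M →ₗ[A] A => hs.form ∘ₗ φ.restrictScalars k := by
  refine ⟨fun φ ψ h => LinearMap.ext fun m => hb.1 (LinearMap.ext fun a => ?_), fun f =>
    ⟨(hs.leftLinearEquiv hb).symm.toLinearMap ∘ₗ dualCurry f, LinearMap.ext fun m => ?_⟩⟩
  · simpa [← hs.form_mul] using LinearMap.congr_fun h (a • m)
  · have h : s ((hs.leftLinearEquiv hb).symm (dualCurry f m)) = dualCurry f m :=
      (hs.leftLinearEquiv hb).apply_symm_apply _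
    change s ((hs.leftLinearEquiv hb).symm (dualCurry f m)) 1 = f m
    rw [h]
    simp [dualCurry]

end SymmetricAlgebra

section DualModule

variable (k : Type u) [Field k] (B : Type u) [Ring B] [Algebra k B]

@[reducible]
def dualLMod (X : Type u) [AddCommGroup X] [Module k X] [Module Bᵐᵒᵖ X]
    [IsScalarTower k Bᵐᵒᵖ X] : Module B (X →ₗ[k] k) where
  smul b f := f ∘ₗ DistribSMul.toLinearMap k X (op b)
  one_smul f := LinearMap.ext fun x => congrArg f (one_smul _ x)
  mul_smul b b' f := LinearMap.ext fun x => congrArg f (by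
    change op (b * b') • x = op b' • op b • x
    rw [op_mul, mul_smul])
  smul_zero _ := rfl
  smul_add _ _ _ := rfl
  add_smul b b' f := LinearMap.ext fun x => by
    change f (op (b + b') • x) = f (op b • x) + f (op b' • x)
    rw [op_add, add_smul, map_add]
  zero_smul f := LinearMap.ext fun x => by
    change f (op (0 : B) • x) = 0
    rw [op_zero, zero_smul, map_zero]

attribute [local instance] dualLMod

variable {k B} {X : Type u} [AddCommGroup X] [Module k X] [Module Bᵐᵒᵖ X] [IsScalarTower k Bᵐᵒᵖ X]
  {Y : Type u} [AddCommGroup Y] [Module k Y] [Module Bᵐᵒᵖ Y] [IsScalarTower k Bᵐᵒᵖ Y]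

lemma dualLMod_smul_apply (b : B) (f : X →ₗ[k] k) (x : X) : (b • f) x = f (op b • x) :=
  rfl

lemma algebraMap_smul_dual (c : k) (f : X →ₗ[k] k) : algebraMap k B c • f = c • f := by
  ext x
  rw [dualLMod_smul_apply, ← MulOpposite.algebraMap_apply, algebraMap_smul, map_smul]
  rfl

def dualMapOp (g : X →ₗ[Bᵐᵒᵖ] Y) : (Y →ₗ[k] k) →ₗ[B] (X →ₗ[k] k) where
  toFun f := f ∘ₗ g.restrictScalars k
  map_add' _ _ := rfl
  map_smul' b f := LinearMap.ext fun x => by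
    simp [dualLMod_smul_apply]

lemma dualMapOp_subtype_surjective (I : Submodule Bᵐᵒᵖ Bᵐᵒᵖ) :
    Function.Surjective (dualMapOp (k := k) I.subtype) := fun f =>
  LinearMap.exists_extend (p := I.restrictScalars k) f

def predual [FiniteDimensional k X] (δ : (X →ₗ[k] k) →ₗ[B] (Y →ₗ[k] k)) : Y →ₗ[Bᵐᵒᵖ] X where
  toFun y := (Module.evalEquiv k X).symm
    { toFun := fun f => δ f y
      map_add' := fun f f' => by rw [map_add, LinearMap.add_apply]
      map_smul' := fun c f => by
        rw [← algebraMap_smul_dual (B := B), map_smul, dualLMod_smul_apply,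
          ← MulOpposite.algebraMap_apply, algebraMap_smul, map_smul, RingHom.id_apply] }
  map_add' y y' := Module.eval_apply_injective k (LinearMap.ext fun f => by simp)
  map_smul' c y := Module.eval_apply_injective k (LinearMap.ext fun f => by
    simp only [Module.Dual.eval_apply, Module.apply_evalEquiv_symm_apply, LinearMap.coe_mk,
      AddHom.coe_mk, RingHom.id_apply]
    rw [← op_unop c, ← dualLMod_smul_apply, ← dualLMod_smul_apply, ← map_smul δ,
      Module.apply_evalEquiv_symm_apply]
    rfl)

lemma apply_predual [FiniteDimensional k X] (δ : (X →ₗ[k] k) →ₗ[B] (Y →ₗ[k] k))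
    (f : X →ₗ[k] k) (y : Y) : f (predual δ y) = δ f y :=
  Module.apply_evalEquiv_symm_apply k X f _

lemma injective_of_projective_dual [FiniteDimensional k X]
    [Module.Projective B (X →ₗ[k] k)] : Module.Injective Bᵐᵒᵖ X := by
  refine Module.Baer.injective fun I g => ?_
  -- the dual of `g` lifts along the surjective restriction `D(Bᵐᵒᵖ) → D(I)`; dualise back
  obtain ⟨δ, hδ⟩ := Module.projective_lifting_property (dualMapOp (k := k) I.subtype) (dualMapOp g)
    (dualMapOp_subtype_surjective I)
  refine ⟨predual δ, fun x hx => Module.eval_apply_injective k (LinearMap.ext fun f => ?_)⟩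
  simp only [Module.Dual.eval_apply, apply_predual]
  exact LinearMap.congr_fun (LinearMap.congr_fun hδ f) ⟨x, hx⟩

variable {A : Type u} [Ring A] [Algebra k A]
  {M : Type u} [AddCommGroup M] [Module k M] [Module A M] [Module Bᵐᵒᵖ M]
  [SMulCommClass A Bᵐᵒᵖ M] [IsScalarTower k A M] [IsScalarTower k Bᵐᵒᵖ M]
  {N : Type u} [AddCommGroup N] [Module B N] [Module Aᵐᵒᵖ N] [SMulCommClass B Aᵐᵒᵖ N]

lemma TensorAdjunction.exists_linearEquiv_dual [Module.Finite A M]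
    (h : TensorAdjunction A B M N) (hA : IsSymmetricAlgebra k A) :
    Nonempty (N ≃ₗ[B] (M →ₗ[k] k)) := by
  obtain ⟨Θ, -, hΘ⟩ := h.exists_addEquiv
  obtain ⟨s, hs, hb⟩ := hA
  exact ⟨LinearEquiv.ofBijective
    { toFun := fun x => hs.form ∘ₗ (Θ x).restrictScalars k
      map_add' := fun x y => by rw [map_add, LinearMap.restrictScalars_add, LinearMap.comp_add]
      map_smul' := fun b x => LinearMap.ext fun m => by
        simp [hΘ, dualLMod_smul_apply] }
    ((hs.bijective_form_comp hb).comp Θ.bijective)⟩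

lemma TensorAdjunction.injective_op [Module.Finite A M] [Module.Finite B N]
    [FiniteDimensional k M] (h₁ : TensorAdjunction A B M N) (h₂ : TensorAdjunction B A N M)
    (hA : IsSymmetricAlgebra k A) : Module.Injective Bᵐᵒᵖ M := by
  have : Module.Projective B N := h₂.projective
  obtain ⟨Ξ⟩ := h₁.exists_linearEquiv_dual hA
  have : Module.Projective B (M →ₗ[k] k) := .of_equiv' Ξ
  exact injective_of_projective_dual (k := k)

end DualModule

theorem stmt8_general (k A B M N Q : Type u) [Field k]
    [Ring A] [Algebra k A]
    [Ring B] [Algebra k B] [FiniteDimensional k B]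
    [AddCommGroup M] [Module k M] [Module A M] [Module Bᵐᵒᵖ M]
    [SMulCommClass A Bᵐᵒᵖ M] [IsScalarTower k A M] [IsScalarTower k Bᵐᵒᵖ M]
    [FiniteDimensional k M]
    [AddCommGroup N] [Module k N] [Module B N] [Module Aᵐᵒᵖ N]
    [SMulCommClass B Aᵐᵒᵖ N] [IsScalarTower k B N]
    [FiniteDimensional k N]
    [AddCommGroup Q] [Module B Q] [Module Bᵐᵒᵖ Q]
    (hiso : ∃ e : BalTensor A N M → B × Q,
      IsBimodHom B B (BalTensor A N M) (B × Q) e ∧ Function.Bijective e)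
    (hadj₁ : TensorAdjunction A B M N) (hadj₂ : TensorAdjunction B A N M)
    (hsymm : IsSymmetricAlgebra k A) :
    Module.Injective B B ∧ Module.Injective Bᵐᵒᵖ B := by
  obtain ⟨e, he, hb⟩ := hiso
  have : IsNoetherian B B := isNoetherian_of_tower k inferInstance
  have : Module.Finite A M := .of_restrictScalars_finite k A M
  have : Module.Finite B N := .of_restrictScalars_finite k B N
  have : Module.Injective A A := hsymm.injective_self
  have : Module.Projective A M := hadj₁.projective
  have : Module.Injective A M := injective_of_projective M
  have : Module.Injective B (BalTensor A N M) := hadj₁.injective_balTensor hadj₂ M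
  have : Module.Injective Bᵐᵒᵖ M := hadj₁.injective_op hadj₂ hsymm
  obtain ⟨n, i, p, hpi⟩ := hadj₁.exists_split_right
  have : Module.Injective Bᵐᵒᵖ (BalTensor A N M) := injective_balTensor_of_split i p hpi
  exact ⟨injective_of_linearEquiv_prod (he.leftLinearEquiv hb),
    injective_of_linearEquiv_prod (he.rightLinearEquiv hb)⟩

/-- Suppose `N ⊗_A M ≅ B ⊕ Q` as `B`-`B`-bimodules with `Q` projective as a
left and as a right `B`-module, and suppose the functors `M ⊗_B −` and `N ⊗_A −` are
biadjoint. If `A` is symmetric, then `B` is self-injective. -/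
theorem stmt8 (k A B M N Q : Type u) [Field k]
    [Ring A] [Algebra k A] [FiniteDimensional k A]
    [Ring B] [Algebra k B] [FiniteDimensional k B]
    [AddCommGroup M] [Module k M] [Module A M] [Module Bᵐᵒᵖ M]
    [SMulCommClass A Bᵐᵒᵖ M] [IsScalarTower k A M] [IsScalarTower k Bᵐᵒᵖ M]
    [FiniteDimensional k M]
    [AddCommGroup N] [Module k N] [Module B N] [Module Aᵐᵒᵖ N]
    [SMulCommClass B Aᵐᵒᵖ N] [IsScalarTower k B N] [IsScalarTower k Aᵐᵒᵖ N]
    [FiniteDimensional k N]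
    [AddCommGroup Q] [Module k Q] [Module B Q] [Module Bᵐᵒᵖ Q]
    [SMulCommClass B Bᵐᵒᵖ Q] [IsScalarTower k B Q] [IsScalarTower k Bᵐᵒᵖ Q]
    [FiniteDimensional k Q]
    (hQl : Module.Projective B Q) (hQr : Module.Projective Bᵐᵒᵖ Q)
    (hiso : ∃ e : BalTensor A N M → B × Q,
      IsBimodHom B B (BalTensor A N M) (B × Q) e ∧ Function.Bijective e)
    (hadj₁ : TensorAdjunction A B M N) (hadj₂ : TensorAdjunction B A N M)
    (hsymm : IsSymmetricAlgebra k A) :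
    Module.Injective B B ∧ Module.Injective Bᵐᵒᵖ B :=
  stmt8_general k A B M N Q hiso hadj₁ hadj₂ hsymm

end

end JJ
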